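/- arXiv:1506.05063 — 2 statements merged into one kernel-verified Lean document; each statement's English description precedes it below -/
import Mathlib

section
/- The first Rogers-Ramanujan identity: as formal power series in q, ∑_{n=0}^∞ q^{n²} / ((1-q)(1-q²)···(1-q^n)) = ∏_{n=0}^∞ 1/((1-q^{5n+1})(1-q^{5n+4})). -/
/-!
Schur's proof. The polynomials `∑ₖ q^{k²} [m-k, k]_q` and
`∑ⱼ (-1)^j q^{j(5j+1)/2} [m, ⌊(m-5j)/2⌋]_q` satisfy the same recurrence
`D_{m+2} = D_{m+1} + q^{m+1} D_m`, so they are equal. Modulo `q^{d+1}` and for `m` large,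
the first is the left-hand side, while in the second every Gaussian binomial that matters is
`1 / (q;q)_{d+1}`, leaving `θ_d / (q;q)_{d+1}` with `θ_d = ∑_{|j| ≤ d} (-1)^j q^{j(5j+1)/2}`.
Truncating in the same way the finite Jacobi triple product
`∑ⱼ (-1)^j q^{j(5j+1)/2} [2N, N+j]_{q⁵} = ∏_{n<N} (1-q^{5n+2})(1-q^{5n+3})` gives
`θ_d ≡ (q⁵;q⁵)_{d+1} ∏_{n≤d} (1-q^{5n+2})(1-q^{5n+3})`. Multiplying by
`∏_{n≤d} (1-q^{5n+1})(1-q^{5n+4})` collects all five residue classes of exponents into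
`(q;q)_{5(d+1)} ≡ (q;q)_{d+1}`, which gives the product side.
-/

open Finset PowerSeries

namespace RogersRamanujan

lemma finsum_eq_sum_Icc {M : Type*} [AddCommMonoid M] {f : ℤ → M} {a b : ℤ}
    (hf : Function.support f ⊆ Set.Icc a b) {A B : ℤ} (hA : A ≤ a) (hB : b ≤ B) :
    ∑ᶠ j, f j = ∑ j ∈ Icc A B, f j :=
  finsum_eq_sum_of_support_subset f (by rw [coe_Icc]; exact hf.trans (Set.Icc_subset_Icc hA hB))

lemma sum_Icc_comp_add_eq_finsum {M : Type*} [AddCommMonoid M] {f : ℤ → M} {a b : ℤ}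
    (hf : Function.support f ⊆ Set.Icc a b) (c : ℤ) {A B : ℤ} (hA : A ≤ a - c)
    (hB : b - c ≤ B) :
    ∑ j ∈ Icc A B, f (j + c) = ∑ᶠ j, f j := by
  rw [← finsum_comp_equiv (Equiv.addRight c)]
  refine (finsum_eq_sum_Icc (a := a - c) (b := b - c) (fun j hj => ?_) hA hB).symm
  have := hf hj
  simp only [Set.mem_Icc] at this ⊢
  omega

def rrExponent (j : ℤ) : ℕ := (j * (5 * j + 1) / 2).toNat

lemma two_mul_rrExponent (j : ℤ) : 2 * (rrExponent j : ℤ) = j * (5 * j + 1) := by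
  have heven : 2 ∣ j * (5 * j + 1) := by
    obtain ⟨r, hr⟩ := Int.even_mul_succ_self j
    exact ⟨r + 2 * j ^ 2, by linear_combination hr⟩
  have hnonneg : 0 ≤ j * (5 * j + 1) := by
    rcases le_or_gt 0 j with hj | hj <;> nlinarith
  rw [rrExponent, Int.toNat_of_nonneg (Int.ediv_nonneg hnonneg (by norm_num)),
    Int.mul_ediv_cancel' heven]

lemma rrExponent_add_one (j : ℤ) : (rrExponent (j + 1) : ℤ) = rrExponent j + 5 * j + 3 := by
  linarith [two_mul_rrExponent j, two_mul_rrExponent (j + 1)]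

lemma natAbs_le_rrExponent (j : ℤ) : j.natAbs ≤ rrExponent j := by
  have h := two_mul_rrExponent j
  zify
  rcases le_or_gt 0 j with hj | hj
  · rw [abs_of_nonneg hj]; nlinarith
  · rw [abs_of_neg hj]; nlinarith

section QIdentities

variable {R : Type*} [CommRing R] (q : R)

/-- `(q; q)_n`. -/
def qPochhammer (n : ℕ) : R := ∏ i ∈ range n, (1 - q ^ (i + 1))

def qBinomial : ℕ → ℕ → R
  | _, 0 => 1
  | 0, _ + 1 => 0
  | n + 1, k + 1 => qBinomial n k + q ^ (k + 1) * qBinomial n (k + 1)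

@[simp] lemma qBinomial_zero_right (n : ℕ) : qBinomial q n 0 = 1 := by
  cases n <;> rfl

lemma qBinomial_succ_succ (n k : ℕ) :
    qBinomial q (n + 1) (k + 1) = qBinomial q n k + q ^ (k + 1) * qBinomial q n (k + 1) := rfl

lemma qBinomial_eq_zero_of_lt {n k : ℕ} (h : n < k) : qBinomial q n k = 0 := by
  induction n generalizing k with
  | zero => obtain ⟨k, rfl⟩ := Nat.exists_eq_add_of_lt h; rfl
  | succ n ih =>
    obtain ⟨k, rfl⟩ := Nat.exists_eq_add_of_lt (Nat.zero_lt_of_lt h)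
    rw [zero_add, qBinomial_succ_succ, ih (by omega), ih (by omega), mul_zero, add_zero]

@[simp] lemma qBinomial_self (n : ℕ) : qBinomial q n n = 1 := by
  induction n with
  | zero => rfl
  | succ n ih =>
    rw [qBinomial_succ_succ, ih, qBinomial_eq_zero_of_lt q n.lt_succ_self, mul_zero, add_zero]

lemma one_sub_pow_mul_qBinomial (n k : ℕ) :
    (1 - q ^ (n - k)) * qBinomial q n k = (1 - q ^ (k + 1)) * qBinomial q n (k + 1) := by
  induction n generalizing k with
  | zero => simp [qBinomial]
  | succ n ih =>
    rcases k with _ | k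
    · have h0 := ih 0
      simp only [qBinomial_zero_right, Nat.sub_zero, zero_add, mul_one] at h0 ⊢
      rw [qBinomial_succ_succ, qBinomial_zero_right]
      linear_combination q * h0
    rcases le_or_gt n k with hnk | hkn
    · rw [Nat.sub_eq_zero_of_le (by omega), pow_zero, sub_self, zero_mul,
        qBinomial_eq_zero_of_lt q (by omega : n + 1 < k + 1 + 1), mul_zero]
    obtain ⟨t, rfl⟩ := Nat.exists_eq_add_of_lt hkn
    have h1 := ih k
    have h2 := ih (k + 1)
    rw [show k + t + 1 - k = t + 1 by omega] at h1
    rw [show k + t + 1 - (k + 1) = t by omega] at h2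
    rw [show k + t + 1 + 1 - (k + 1) = t + 1 by omega, qBinomial_succ_succ q _ k,
      qBinomial_succ_succ q _ (k + 1)]
    linear_combination h1 + q ^ (k + 1 + 1) * h2

lemma qBinomial_succ_succ' (n k : ℕ) :
    qBinomial q (n + 1) (k + 1) = q ^ (n - k) * qBinomial q n k + qBinomial q n (k + 1) := by
  rw [qBinomial_succ_succ]
  linear_combination one_sub_pow_mul_qBinomial q n k

lemma qBinomial_mul_qPochhammer {n k : ℕ} (h : k ≤ n) :
    qBinomial q n k * qPochhammer q k * qPochhammer q (n - k) = qPochhammer q n := by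
  induction n generalizing k with
  | zero => obtain rfl := Nat.le_zero.mp h; simp [qPochhammer]
  | succ n ih =>
    rcases k with _ | k
    · simp [qPochhammer]
    obtain rfl | hk := eq_or_lt_of_le (Nat.le_of_succ_le_succ h)
    · simp [qPochhammer]
    obtain ⟨t, rfl⟩ := Nat.exists_eq_add_of_lt hk
    have h1 := ih (k := k) (by omega)
    have h2 := ih (k := k + 1) (by omega)
    rw [show k + t + 1 - k = t + 1 by omega] at h1
    rw [show k + t + 1 - (k + 1) = t by omega] at h2
    rw [show k + t + 1 + 1 - (k + 1) = t + 1 by omega, qBinomial_succ_succ]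
    simp only [qPochhammer, prod_range_succ] at h1 h2 ⊢
    linear_combination (1 - q ^ (k + 1)) * h1 + q ^ (k + 1) * (1 - q ^ (t + 1)) * h2

lemma qPochhammer_five_mul (L : ℕ) :
    qPochhammer q (5 * L) = (∏ n ∈ range L, (1 - q ^ (5 * n + 1)) * (1 - q ^ (5 * n + 4))) *
      qPochhammer (q ^ 5) L * ∏ n ∈ range L, (1 - q ^ (5 * n + 2)) * (1 - q ^ (5 * n + 3)) := by
  induction L with
  | zero => simp [qPochhammer]
  | succ L ih =>
    rw [qPochhammer, show 5 * (L + 1) = 5 * L + 5 by ring, prod_range_add, ← qPochhammer, ih]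
    simp only [qPochhammer, prod_range_succ]
    ring

def qBinomialInt (n : ℕ) : ℤ → R
  | (k : ℕ) => qBinomial q n k
  | Int.negSucc _ => 0

@[simp] lemma qBinomialInt_natCast (n k : ℕ) : qBinomialInt q n k = qBinomial q n k := rfl

@[simp] lemma qBinomialInt_zero (n : ℕ) : qBinomialInt q n 0 = 1 := qBinomial_zero_right q n

lemma qBinomialInt_of_nonneg (n : ℕ) {k : ℤ} (hk : 0 ≤ k) :
    qBinomialInt q n k = qBinomial q n k.toNat := by
  lift k to ℕ using hk
  rfl

lemma qBinomialInt_of_neg (n : ℕ) {k : ℤ} (hk : k < 0) : qBinomialInt q n k = 0 := by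
  obtain ⟨k, rfl⟩ := Int.exists_eq_neg_ofNat hk.le
  rcases k with _ | k
  · simp at hk
  · rfl

lemma qBinomialInt_eq_zero {n : ℕ} {k : ℤ} (hk : k < 0 ∨ n < k) : qBinomialInt q n k = 0 := by
  rcases hk with hk | hk
  · exact qBinomialInt_of_neg q n hk
  · rw [qBinomialInt_of_nonneg q n (by omega), qBinomial_eq_zero_of_lt q (by omega)]

lemma qBinomialInt_succ (n : ℕ) (k : ℤ) :
    qBinomialInt q (n + 1) k = qBinomialInt q n (k - 1) + q ^ k.toNat * qBinomialInt q n k := by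
  rcases lt_trichotomy k 0 with hk | rfl | hk
  · simp [qBinomialInt_of_neg, hk, qBinomialInt_of_neg q n (by omega : k - 1 < 0)]
  · simp [qBinomialInt_of_neg]
  · obtain ⟨k, rfl⟩ : ∃ k' : ℕ, k = ((k' + 1 : ℕ) : ℤ) := ⟨k.toNat - 1, by omega⟩
    rw [show ((k + 1 : ℕ) : ℤ) - 1 = k by push_cast; ring]
    simp only [qBinomialInt_natCast, Int.toNat_natCast]
    exact qBinomial_succ_succ q n k

lemma qBinomialInt_succ' (n : ℕ) (k : ℤ) :
    qBinomialInt q (n + 1) k =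
      q ^ ((n : ℤ) + 1 - k).toNat * qBinomialInt q n (k - 1) + qBinomialInt q n k := by
  rcases lt_trichotomy k 0 with hk | rfl | hk
  · simp [qBinomialInt_of_neg, hk, qBinomialInt_of_neg q n (by omega : k - 1 < 0)]
  · simp [qBinomialInt_of_neg]
  · obtain ⟨k, rfl⟩ : ∃ k' : ℕ, k = ((k' + 1 : ℕ) : ℤ) := ⟨k.toNat - 1, by omega⟩
    rw [show ((k + 1 : ℕ) : ℤ) - 1 = k by push_cast; ring,
      show ((n : ℤ) + 1 - (k + 1 : ℕ)).toNat = n - k by omega]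
    simp only [qBinomialInt_natCast]
    exact qBinomial_succ_succ' q n k

lemma pow_mul_qBinomialInt_congr (x : R) {n : ℕ} {k : ℤ} {a b : ℕ}
    (h : 0 ≤ k → k ≤ n → a = b) :
    x ^ a * qBinomialInt q n k = x ^ b * qBinomialInt q n k := by
  by_cases hk : 0 ≤ k ∧ k ≤ n
  · rw [h hk.1 hk.2]
  · rw [qBinomialInt_eq_zero q (by omega), mul_zero, mul_zero]

lemma qBinomialInt_add_two (n : ℕ) (k : ℤ) :
    qBinomialInt q (n + 2) k = qBinomialInt q (n + 1) (k - 1) +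
      q ^ (n + 1) * qBinomialInt q n (k - 1) + q ^ k.toNat * qBinomialInt q n k := by
  rw [qBinomialInt_succ q (n + 1), qBinomialInt_succ' q n k, mul_add, ← mul_assoc, ← pow_add,
    pow_mul_qBinomialInt_congr q q (b := n + 1) (by omega)]
  ring

lemma qBinomialInt_add_two' (n : ℕ) (k : ℤ) :
    qBinomialInt q (n + 2) k = qBinomialInt q (n + 1) k + q ^ (n + 1) * qBinomialInt q n (k - 1) +
      q ^ ((n : ℤ) + 2 - k).toNat * qBinomialInt q n (k - 2) := by
  rw [qBinomialInt_succ' q (n + 1), qBinomialInt_succ q n (k - 1),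
    show ((n + 1 : ℕ) : ℤ) + 1 - k = n + 2 - k by push_cast; ring,
    show k - 1 - 1 = k - 2 by ring,
    mul_add, ← mul_assoc, ← pow_add,
    pow_mul_qBinomialInt_congr q q (k := k - 1) (b := n + 1) (by omega)]
  ring

noncomputable def truncatedTheta (d : ℕ) : R :=
  ∑ j ∈ Icc (-(d : ℤ)) d, j.negOnePow * q ^ rrExponent j

section Schur

def schurSum (m : ℕ) : R := ∑ k ∈ range (m + 1), q ^ (k ^ 2) * qBinomial q (m - k) k

def schurAltTerm (m : ℕ) (j : ℤ) : R :=
  j.negOnePow * q ^ rrExponent j * qBinomialInt q m ((m - 5 * j) / 2)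

noncomputable def schurAltSum (m : ℕ) : R := ∑ᶠ j, schurAltTerm q m j

lemma schurSum_zero : schurSum q 0 = 1 := by simp [schurSum]

lemma schurSum_one : schurSum q 1 = 1 := by
  simp [schurSum, sum_range_succ, qBinomial_eq_zero_of_lt]

lemma schurSum_add_two (m : ℕ) :
    schurSum q (m + 2) = schurSum q (m + 1) + q ^ (m + 1) * schurSum q m := by
  have hterm (k : ℕ) : q ^ ((k + 1) ^ 2) * qBinomial q (m + 1 - k) (k + 1) =
      q ^ (m + 1) * (q ^ (k ^ 2) * qBinomial q (m - k) k) +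
        q ^ ((k + 1) ^ 2) * qBinomial q (m - k) (k + 1) := by
    rcases le_or_gt k m with hkm | hkm
    · rw [show m + 1 - k = m - k + 1 by omega, qBinomial_succ_succ']
      rcases le_or_gt k (m - k) with hk | hk
      · obtain ⟨a, rfl⟩ : ∃ a, m = k + k + a := ⟨m - k - k, by omega⟩
        rw [show k + k + a - k = k + a by omega, Nat.add_sub_cancel_left]
        ring
      · rw [qBinomial_eq_zero_of_lt q hk]
        ring
    · rw [show m + 1 - k = 0 by omega, show m - k = 0 by omega,
        qBinomial_eq_zero_of_lt q (by omega : 0 < k)]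
      ring
  have hm : ∑ k ∈ range (m + 2), q ^ (k ^ 2) * qBinomial q (m - k) k = schurSum q m := by
    rw [sum_range_succ, schurSum, Nat.sub_eq_zero_of_le (by omega),
      qBinomial_eq_zero_of_lt q (by omega : 0 < m + 1), mul_zero, add_zero]
  have hm₁ : ∑ k ∈ range (m + 2), q ^ ((k + 1) ^ 2) * qBinomial q (m - k) (k + 1) + 1 =
      schurSum q (m + 1) := by
    rw [schurSum, sum_range_succ' (fun k => q ^ (k ^ 2) * qBinomial q (m + 1 - k) k),
      sum_range_succ (fun k => q ^ ((k + 1) ^ 2) * qBinomial q (m - k) (k + 1))]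
    simp [qBinomial_eq_zero_of_lt]
  rw [schurSum, sum_range_succ', sum_congr rfl fun k _ => by
      rw [show m + 2 - (k + 1) = m + 1 - k by omega, hterm k],
    sum_add_distrib, ← mul_sum, hm, ← hm₁]
  simp only [Nat.sub_zero, ne_eq, OfNat.ofNat_ne_zero, not_false_eq_true, zero_pow,
    pow_zero, qBinomial_zero_right, mul_one]
  ring

lemma support_schurAltTerm (m : ℕ) : Function.support (schurAltTerm q m) ⊆ Set.Icc (-m) m := by
  intro j hj
  by_contra hjm
  rw [Set.mem_Icc] at hjm
  exact hj (by rw [schurAltTerm, qBinomialInt_eq_zero q (by omega), mul_zero])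

lemma schurAltSum_of_le_one {m : ℕ} (hm : m ≤ 1) : schurAltSum q m = 1 := by
  rw [schurAltSum, finsum_eq_single _ 0 fun j hj => by
    rw [schurAltTerm, qBinomialInt_eq_zero q (by omega), mul_zero]]
  interval_cases m <;> simp [schurAltTerm, rrExponent]

noncomputable def schurAltPrimitive (m : ℕ) (j : ℤ) : R :=
  if Even ((m : ℤ) + j) then
    j.negOnePow * q ^ (rrExponent j + (((m : ℤ) + 2 - 5 * j) / 2).toNat) *
      qBinomialInt q m (((m : ℤ) + 2 - 5 * j) / 2)
  else 0

lemma support_schurAltPrimitive (m : ℕ) :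
    Function.support (schurAltPrimitive q m) ⊆ Set.Icc (-m) m := by
  intro j hj
  by_contra hjm
  rw [Set.mem_Icc] at hjm
  refine hj ?_
  rw [schurAltPrimitive]
  split_ifs
  · rw [qBinomialInt_eq_zero q (by omega), mul_zero]
  · rfl

lemma schurAltTerm_add_two (m : ℕ) (j : ℤ) :
    schurAltTerm q (m + 2) j - schurAltTerm q (m + 1) j - q ^ (m + 1) * schurAltTerm q m j =
      schurAltPrimitive q m j - schurAltPrimitive q m (j + 1) := by
  set h := ((m : ℤ) + 2 - 5 * j) / 2 with hh
  simp only [schurAltTerm, schurAltPrimitive, ← hh]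
  by_cases hpar : Even ((m : ℤ) + j)
  · obtain ⟨r, hr⟩ := hpar
    have hodd : ¬ Even ((m : ℤ) + (j + 1)) := by
      rw [Int.not_even_iff_odd]; exact ⟨r, by omega⟩
    rw [if_pos ⟨r, hr⟩, if_neg hodd,
      show (((m + 2 : ℕ) : ℤ) - 5 * j) / 2 = h by push_cast; omega,
      show (((m + 1 : ℕ) : ℤ) - 5 * j) / 2 = h - 1 by push_cast; omega,
      show ((m : ℤ) - 5 * j) / 2 = h - 1 by omega, qBinomialInt_add_two]
    ring
  · obtain ⟨r, hr⟩ := Int.not_even_iff_odd.mp hpar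
    have heven : Even ((m : ℤ) + (j + 1)) := ⟨r + 1, by omega⟩
    rw [if_neg hpar, if_pos heven,
      show (((m + 2 : ℕ) : ℤ) - 5 * j) / 2 = h by push_cast; omega,
      show (((m + 1 : ℕ) : ℤ) - 5 * j) / 2 = h by push_cast; omega,
      show ((m : ℤ) - 5 * j) / 2 = h - 1 by omega,
      show ((m : ℤ) + 2 - 5 * (j + 1)) / 2 = h - 2 by omega, qBinomialInt_add_two',
      Int.negOnePow_succ]
    have hexp := pow_mul_qBinomialInt_congr q q (n := m) (k := h - 2)
      (a := rrExponent j + ((m : ℤ) + 2 - h).toNat) (b := rrExponent (j + 1) + (h - 2).toNat)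
      (by have := rrExponent_add_one j; omega)
    simp only [pow_add] at hexp
    push_cast
    linear_combination (j.negOnePow : R) * hexp

lemma schurAltSum_add_two (m : ℕ) :
    schurAltSum q (m + 2) = schurAltSum q (m + 1) + q ^ (m + 1) * schurAltSum q m := by
  have hsum (n : ℕ) (hn : n ≤ m + 2) :
      schurAltSum q n = ∑ j ∈ Icc (-(m : ℤ) - 3) (m + 2), schurAltTerm q n j :=
    finsum_eq_sum_Icc (support_schurAltTerm q n) (by omega) (by omega)
  rw [← sub_eq_zero, sub_add_eq_sub_sub, hsum _ le_rfl, hsum _ (by omega), hsum _ (by omega),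
    mul_sum, ← sum_sub_distrib, ← sum_sub_distrib]
  simp only [schurAltTerm_add_two, sum_sub_distrib]
  rw [sum_Icc_comp_add_eq_finsum (support_schurAltPrimitive q m) 1 (by omega) (by omega),
    ← finsum_eq_sum_Icc (support_schurAltPrimitive q m) (by omega) (by omega), sub_self]

theorem schurSum_eq_schurAltSum (m : ℕ) : schurSum q m = schurAltSum q m := by
  induction m using Nat.twoStepInduction with
  | zero => rw [schurSum_zero, schurAltSum_of_le_one q zero_le_one]
  | one => rw [schurSum_one, schurAltSum_of_le_one q le_rfl]
  | more m ih ih' => rw [schurSum_add_two, schurAltSum_add_two, ih, ih']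

end Schur

section Jacobi

def jacobiTerm (N : ℕ) (j : ℤ) : R :=
  j.negOnePow * q ^ rrExponent j * qBinomialInt (q ^ 5) (2 * N) (N + j)

noncomputable def jacobiSum (N : ℕ) : R := ∑ᶠ j, jacobiTerm q N j

lemma support_jacobiTerm (N : ℕ) : Function.support (jacobiTerm q N) ⊆ Set.Icc (-N) N := by
  intro j hj
  by_contra hjN
  rw [Set.mem_Icc] at hjN
  exact hj (by rw [jacobiTerm, qBinomialInt_eq_zero _ (by push_cast; omega), mul_zero])

lemma jacobiTerm_succ (N : ℕ) (j : ℤ) :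
    jacobiTerm q (N + 1) j = (1 + q ^ (10 * N + 5)) * jacobiTerm q N j -
      q ^ (5 * N + 3) * jacobiTerm q N (j - 1) - q ^ (5 * N + 2) * jacobiTerm q N (j + 1) := by
  have hbinom := qBinomialInt_add_two (q ^ 5) (2 * N) (N + j + 1)
  rw [show (N : ℤ) + j + 1 - 1 = N + j by ring, qBinomialInt_succ' _ (2 * N) (N + j),
    show (((2 * N : ℕ) : ℤ) + 1 - (N + j)) = N + 1 - j by push_cast; ring,
    show (N : ℤ) + j - 1 = N + (j - 1) by ring,
    show (N : ℤ) + j + 1 = N + (j + 1) by ring] at hbinom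
  have hprev := pow_mul_qBinomialInt_congr (q ^ 5) q (n := 2 * N) (k := N + (j - 1))
    (a := rrExponent j + 5 * (N + 1 - j).toNat) (b := rrExponent (j - 1) + (5 * N + 3))
    (by have := rrExponent_add_one (j - 1); rw [sub_add_cancel] at this; omega)
  have hnext := pow_mul_qBinomialInt_congr (q ^ 5) q (n := 2 * N) (k := N + (j + 1))
    (a := rrExponent j + 5 * (N + (j + 1)).toNat) (b := rrExponent (j + 1) + (5 * N + 2))
    (by have := rrExponent_add_one j; omega)
  simp only [pow_add, pow_mul] at hprev hnext
  simp only [jacobiTerm, show 2 * (N + 1) = 2 * N + 2 by ring, Nat.cast_succ,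
    show (N : ℤ) + 1 + j = N + (j + 1) by ring, hbinom, Int.negOnePow_succ, Int.negOnePow_sub,
    Int.negOnePow_one]
  push_cast
  linear_combination (j.negOnePow : R) * (hprev + hnext)

lemma jacobiSum_succ (N : ℕ) :
    jacobiSum q (N + 1) = (1 - q ^ (5 * N + 2)) * (1 - q ^ (5 * N + 3)) * jacobiSum q N := by
  have hshift (c : ℤ) (hc : -1 ≤ c ∧ c ≤ 1) :
      ∑ j ∈ Icc (-(N : ℤ) - 1) (N + 1), jacobiTerm q N (j + c) = jacobiSum q N :=
    sum_Icc_comp_add_eq_finsum (support_jacobiTerm q N) c (by omega) (by omega)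
  have hprev := hshift (-1) (by norm_num)
  simp only [← sub_eq_add_neg] at hprev
  have hsame := hshift 0 (by norm_num)
  simp only [add_zero] at hsame
  rw [jacobiSum, finsum_eq_sum_Icc (A := -(N : ℤ) - 1) (B := N + 1) (support_jacobiTerm q (N + 1))
    (by push_cast; omega) (by push_cast; omega)]
  simp only [jacobiTerm_succ, sum_sub_distrib, ← mul_sum, hprev, hsame, hshift 1 (by norm_num)]
  ring

lemma jacobiSum_zero : jacobiSum q 0 = 1 := by
  rw [jacobiSum, finsum_eq_single _ 0 fun j hj => by
    rw [jacobiTerm, qBinomialInt_eq_zero _ (by omega), mul_zero]]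
  simp [jacobiTerm, rrExponent]

/-- A finite form of the Jacobi triple product identity. -/
theorem jacobiSum_eq_prod (N : ℕ) :
    jacobiSum q N = ∏ n ∈ range N, (1 - q ^ (5 * n + 2)) * (1 - q ^ (5 * n + 3)) := by
  induction N with
  | zero => exact jacobiSum_zero q
  | succ N ih => rw [jacobiSum_succ, ih, prod_range_succ, mul_comm]

end Jacobi

end QIdentities

section Truncation

variable {R : Type*} [CommRing R]

lemma coeff_eq_of_smodEq {d : ℕ} {a b : R⟦X⟧} (h : a ≡ b [SMOD Ideal.span {X ^ (d + 1)}]) :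
    coeff d a = coeff d b := by
  rw [SModEq.sub_mem, Ideal.mem_span_singleton, X_pow_dvd_iff] at h
  simpa [sub_eq_zero] using h d (lt_add_one d)

lemma span_X_pow_antitone {m n : ℕ} (h : m ≤ n) :
    Ideal.span {(X : R⟦X⟧) ^ n} ≤ Ideal.span {X ^ m} :=
  Ideal.span_singleton_le_span_singleton.mpr (pow_dvd_pow X h)

lemma X_pow_mul_smodEq_zero {n e : ℕ} (h : n ≤ e) (a : R⟦X⟧) :
    X ^ e * a ≡ 0 [SMOD Ideal.span {X ^ n}] :=
  SModEq.zero.mpr (Ideal.mem_span_singleton.mpr (dvd_mul_of_dvd_left (pow_dvd_pow X h) a))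

lemma one_sub_X_pow_smodEq_one {n e : ℕ} (h : n ≤ e) :
    (1 - X ^ e : R⟦X⟧) ≡ 1 [SMOD Ideal.span {X ^ n}] := by
  rw [SModEq.sub_mem, sub_sub_cancel_left, Ideal.neg_mem_iff, Ideal.mem_span_singleton]
  exact pow_dvd_pow X h

lemma constantCoeff_qPochhammer {q : R⟦X⟧} (hq : constantCoeff q = 0) (n : ℕ) :
    constantCoeff (qPochhammer q n) = 1 := by
  simp [qPochhammer, map_prod, hq]

lemma prod_range_smodEq_prod_range {A : Type*} [CommRing A] {I : Ideal A} {f : ℕ → A}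
    {m N : ℕ} (h : m ≤ N) (hf : ∀ n ∈ Ico m N, f n ≡ 1 [SMOD I]) :
    ∏ n ∈ range N, f n ≡ ∏ n ∈ range m, f n [SMOD I] := by
  rw [← prod_range_mul_prod_Ico _ h]
  conv_rhs => rw [← mul_one (∏ n ∈ range m, f n)]
  exact SModEq.rfl.mul ((SModEq.prod hf).trans (by rw [prod_const_one]))

lemma qPochhammer_X_pow_smodEq (s : ℕ) {a b : ℕ} (h : a ≤ b) :
    qPochhammer (X ^ s : R⟦X⟧) b ≡ qPochhammer (X ^ s) a
      [SMOD Ideal.span {X ^ (s * (a + 1))}] :=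
  prod_range_smodEq_prod_range h fun i hi => by
    rw [← pow_mul]
    exact one_sub_X_pow_smodEq_one (Nat.mul_le_mul_left s (by rw [mem_Ico] at hi; omega))

/-- The terms with `|j| > d` vanish modulo `X ^ (d + 1)` because `|j| ≤ rrExponent j`. -/
lemma sum_mul_smodEq_mul_truncatedTheta {d : ℕ} {I : Finset ℤ} (hI : Icc (-(d : ℤ)) d ⊆ I)
    {b : ℤ → R⟦X⟧} {c : R⟦X⟧}
    (hb : ∀ j ∈ Icc (-(d : ℤ)) d, b j ≡ c [SMOD Ideal.span {X ^ (d + 1)}]) :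
    ∑ j ∈ I, (j.negOnePow : R⟦X⟧) * X ^ rrExponent j * b j ≡ c * truncatedTheta X d
      [SMOD Ideal.span {X ^ (d + 1)}] := by
  rw [truncatedTheta, ← sum_sdiff hI, mul_sum, ← zero_add (∑ j ∈ Icc _ _, c * _)]
  refine SModEq.add ?_ (SModEq.sum fun j hj => ?_)
  · refine (SModEq.sum (y := fun _ => 0) fun j hj => ?_).trans (by rw [sum_const_zero])
    rw [mem_sdiff, mem_Icc] at hj
    have := natAbs_le_rrExponent j
    rw [mul_comm (j.negOnePow : R⟦X⟧), mul_assoc]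
    exact X_pow_mul_smodEq_zero (by omega) _
  · rw [mul_comm c]
    exact SModEq.rfl.mul (hb j hj)

section Field

variable {K : Type*} [Field K]

lemma SModEq.of_mul_left {I : Ideal K⟦X⟧} {u a b : K⟦X⟧} (hu : constantCoeff u ≠ 0)
    (h : u * a ≡ u * b [SMOD I]) : a ≡ b [SMOD I] := by
  simpa [← mul_assoc, PowerSeries.inv_mul_cancel u hu] using (SModEq.refl u⁻¹).mul h

lemma SModEq.inv {I : Ideal K⟦X⟧} {a b : K⟦X⟧} (ha : constantCoeff a ≠ 0)
    (hb : constantCoeff b ≠ 0) (h : a ≡ b [SMOD I]) : a⁻¹ ≡ b⁻¹ [SMOD I] := by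
  refine SModEq.of_mul_left (u := a * b) (by simp [ha, hb]) ?_
  rw [mul_right_comm, PowerSeries.mul_inv_cancel a ha, one_mul, mul_assoc,
    PowerSeries.mul_inv_cancel b hb, mul_one]
  exact h.symm

lemma qBinomial_X_pow_smodEq {s : ℕ} (hs : s ≠ 0) {n k : ℕ} (hk : k ≤ n) :
    qBinomial (X ^ s : K⟦X⟧) n k ≡ (qPochhammer (X ^ s) k)⁻¹
      [SMOD Ideal.span {X ^ (s * (n - k + 1))}] := by
  set P := qPochhammer (X ^ s : K⟦X⟧)
  have hP (m : ℕ) : constantCoeff (P m) ≠ 0 := by simp [P, constantCoeff_qPochhammer, hs]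
  refine SModEq.of_mul_left (u := P k * P (n - k)) (by simp [hP]) ?_
  rw [show P k * P (n - k) * qBinomial (X ^ s) n k = P n by
      simp only [P]; rw [← qBinomial_mul_qPochhammer _ hk]; ring,
    mul_right_comm, PowerSeries.mul_inv_cancel _ (hP k), one_mul]
  exact qPochhammer_X_pow_smodEq s (Nat.sub_le n k)

lemma qBinomial_X_pow_smodEq_of_le {s : ℕ} (hs : s ≠ 0) {n h D : ℕ} (hD : D ≤ h)
    (hD' : h + D ≤ n) :
    qBinomial (X ^ s : K⟦X⟧) n h ≡ (qPochhammer (X ^ s) D)⁻¹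
      [SMOD Ideal.span {X ^ D}] := by
  have hP (m : ℕ) : constantCoeff (qPochhammer (X ^ s : K⟦X⟧) m) ≠ 0 := by
    simp [constantCoeff_qPochhammer, hs]
  have hle (m : ℕ) (hm : D ≤ m) : D ≤ s * m :=
    hm.trans (Nat.le_mul_of_pos_left m (Nat.pos_of_ne_zero hs))
  exact ((qBinomial_X_pow_smodEq hs (by omega)).mono (span_X_pow_antitone (hle _ (by omega)))).trans
    ((SModEq.inv (hP _) (hP _) (qPochhammer_X_pow_smodEq s hD)).mono
      (span_X_pow_antitone (hle _ (by omega))))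

lemma sum_X_pow_sq_mul_inv_smodEq_schurSum {d M : ℕ} (hM : 3 * d ≤ M) :
    ∑ n ∈ range (d + 1), X ^ (n ^ 2) * (qPochhammer (X : K⟦X⟧) n)⁻¹ ≡ schurSum X M
      [SMOD Ideal.span {X ^ (d + 1)}] := by
  rw [schurSum, ← sum_range_add_sum_Ico _ (by omega : d + 1 ≤ M + 1),
    ← add_zero (∑ n ∈ range _, _)]
  refine SModEq.add (SModEq.sum fun k hk => SModEq.rfl.mul ?_)
    ((SModEq.sum (y := fun _ => 0) fun k hk => ?_).trans (by rw [sum_const_zero])).symm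
  · rw [mem_range] at hk
    have h := qBinomial_X_pow_smodEq (K := K) one_ne_zero (by omega : k ≤ M - k)
    rw [pow_one, one_mul] at h
    exact (h.mono (span_X_pow_antitone (by omega))).symm
  · rw [mem_Ico] at hk
    exact X_pow_mul_smodEq_zero ((Nat.le_self_pow two_ne_zero k).trans' hk.1) _

lemma schurAltSum_X_smodEq {d M : ℕ} (hM : 7 * d + 2 ≤ M) :
    schurAltSum (X : K⟦X⟧) M ≡ (qPochhammer X (d + 1))⁻¹ * truncatedTheta X d
      [SMOD Ideal.span {X ^ (d + 1)}] := by
  rw [schurAltSum, finsum_eq_sum_Icc (support_schurAltTerm X M) le_rfl le_rfl]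
  refine sum_mul_smodEq_mul_truncatedTheta (Icc_subset_Icc (by omega) (by omega)) fun j hj => ?_
  rw [mem_Icc] at hj
  rw [qBinomialInt_of_nonneg _ _ (by omega)]
  simpa using qBinomial_X_pow_smodEq_of_le (K := K) one_ne_zero (n := M)
    (h := (((M : ℤ) - 5 * j) / 2).toNat) (D := d + 1) (by omega) (by omega)

lemma jacobiSum_X_smodEq {d N : ℕ} (hN : 2 * d + 1 ≤ N) :
    jacobiSum (X : K⟦X⟧) N ≡ (qPochhammer (X ^ 5) (d + 1))⁻¹ * truncatedTheta X d
      [SMOD Ideal.span {X ^ (d + 1)}] := by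
  rw [jacobiSum, finsum_eq_sum_Icc (support_jacobiTerm X N) le_rfl le_rfl]
  refine sum_mul_smodEq_mul_truncatedTheta (Icc_subset_Icc (by omega) (by omega)) fun j hj => ?_
  rw [mem_Icc] at hj
  rw [qBinomialInt_of_nonneg _ _ (by omega)]
  exact qBinomial_X_pow_smodEq_of_le (K := K) (by norm_num) (by omega) (by omega)

lemma sum_X_pow_sq_mul_inv_smodEq (d : ℕ) :
    ∑ n ∈ range (d + 1), X ^ (n ^ 2) * (qPochhammer (X : K⟦X⟧) n)⁻¹ ≡
      (qPochhammer X (d + 1))⁻¹ * truncatedTheta X d [SMOD Ideal.span {X ^ (d + 1)}] := by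
  refine (sum_X_pow_sq_mul_inv_smodEq_schurSum (M := 7 * d + 2) (by omega)).trans ?_
  rw [schurSum_eq_schurAltSum]
  exact schurAltSum_X_smodEq le_rfl

lemma truncatedTheta_X_smodEq (d : ℕ) :
    truncatedTheta (X : K⟦X⟧) d ≡ qPochhammer (X ^ 5) (d + 1) *
      ∏ n ∈ range (d + 1), (1 - X ^ (5 * n + 2)) * (1 - X ^ (5 * n + 3))
      [SMOD Ideal.span {X ^ (d + 1)}] := by
  have hV : constantCoeff (qPochhammer (X ^ 5 : K⟦X⟧) (d + 1)) ≠ 0 := by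
    simp [constantCoeff_qPochhammer]
  have h := jacobiSum_X_smodEq (K := K) (d := d) (N := 2 * d + 1) le_rfl
  rw [jacobiSum_eq_prod] at h
  refine SModEq.of_mul_left (u := (qPochhammer (X ^ 5) (d + 1))⁻¹) (by simpa using hV) ?_
  rw [← mul_assoc, PowerSeries.inv_mul_cancel _ hV, one_mul]
  refine h.symm.trans (prod_range_smodEq_prod_range (by omega) fun n hn => ?_)
  rw [mem_Ico] at hn
  simpa only [mul_one] using (one_sub_X_pow_smodEq_one (R := K) (n := d + 1) (e := 5 * n + 2)
    (by omega)).mul (one_sub_X_pow_smodEq_one (e := 5 * n + 3) (by omega))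

theorem rogersRamanujan_smodEq (d : ℕ) :
    ∑ n ∈ range (d + 1), X ^ (n ^ 2) * (qPochhammer (X : K⟦X⟧) n)⁻¹ ≡
      ∏ n ∈ range (d + 1), ((1 - X ^ (5 * n + 1)) * (1 - X ^ (5 * n + 4)))⁻¹
      [SMOD Ideal.span {X ^ (d + 1)}] := by
  set U := qPochhammer (X : K⟦X⟧) (d + 1) with hU_def
  set P₁₄ := ∏ n ∈ range (d + 1), (1 - (X : K⟦X⟧) ^ (5 * n + 1)) * (1 - X ^ (5 * n + 4))
  have hU : constantCoeff U ≠ 0 := by simp [U, constantCoeff_qPochhammer]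
  have hP₁₄ :
      P₁₄ * ∏ n ∈ range (d + 1), ((1 - X ^ (5 * n + 1)) * (1 - X ^ (5 * n + 4)))⁻¹ = 1 := by
    rw [← prod_mul_distrib]
    exact prod_eq_one fun n _ => PowerSeries.mul_inv_cancel _ (by simp)
  have hsplit : P₁₄ * qPochhammer (X ^ 5) (d + 1) *
      ∏ n ∈ range (d + 1), (1 - X ^ (5 * n + 2)) * (1 - X ^ (5 * n + 3)) ≡ U
      [SMOD Ideal.span {X ^ (d + 1)}] := by
    rw [← qPochhammer_five_mul]
    simpa using (qPochhammer_X_pow_smodEq 1 (by omega : d + 1 ≤ 5 * (d + 1))).mono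
      (span_X_pow_antitone (by omega))
  refine (sum_X_pow_sq_mul_inv_smodEq d).trans
    (SModEq.of_mul_left (u := U * P₁₄) (by simp [hU, P₁₄, map_prod]) ?_)
  rw [← hU_def, show U * P₁₄ * (U⁻¹ * truncatedTheta X d) = P₁₄ * truncatedTheta X d by
      rw [mul_comm U, mul_assoc, ← mul_assoc U, PowerSeries.mul_inv_cancel _ hU, one_mul],
    mul_assoc U, hP₁₄, mul_one]
  refine (SModEq.rfl.mul (truncatedTheta_X_smodEq (K := K) d)).trans ?_
  rwa [← mul_assoc]

end Field

end Truncation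

end RogersRamanujan

/-- The first Rogers–Ramanujan identity, as an identity of formal power series over `ℚ`,
stated coefficientwise: for every degree `d`, the coefficient of `q^d` of
`∑_{n≥0} q^{n²}/((q;q)_n)` equals that of `∏_{n≥0} 1/((1-q^{5n+1})(1-q^{5n+4}))`.
Terms with `n > d` contribute nothing to the coefficient of `q^d` on either side,
so both sides may be truncated at `n ≤ d`. -/
theorem rogers_ramanujan_first (d : ℕ) :
    PowerSeries.coeff d
        (∑ n ∈ Finset.range (d + 1),
          (PowerSeries.X : PowerSeries ℚ) ^ (n ^ 2) *
            (∏ j ∈ Finset.range n, (1 - (PowerSeries.X : PowerSeries ℚ) ^ (j + 1)))⁻¹)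
      = PowerSeries.coeff d
        (∏ n ∈ Finset.range (d + 1),
          ((1 - (PowerSeries.X : PowerSeries ℚ) ^ (5 * n + 1)) *
            (1 - (PowerSeries.X : PowerSeries ℚ) ^ (5 * n + 4)))⁻¹) :=
  RogersRamanujan.coeff_eq_of_smodEq (RogersRamanujan.rogersRamanujan_smodEq d)
end

section
/- The Andrews-Gordon identity for i = m+1: for every positive integer m, ∑_{r₁ ≥ r₂ ≥ ··· ≥ r_m ≥ 0} q^{r₁²+···+r_m²} / ((q;q)_{r₁−r₂} ··· (q;q)_{r_{m−1}−r_m} (q;q)_{r_m}) = (q^{2m+3};q^{2m+3})_∞ / (q;q)_∞ · θ(q^{m+1}; q^{2m+3}), as formal power series in q. -/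
/-!
Proof by the Bailey chain. Pushing the unit Bailey pair `α_s = (-1)^s q^(s(s-1)/2) (1 + q^s)`,
`β_n = δ_(n,0)` through Bailey's lemma `m + 1` times gives
`β_n = ∑_s q^((m+1)s²) α_s / ((q)_(n-s) (q)_(n+s))`, while unfolding the recursion that defines
`β_n` gives the `m`-fold sum of the theorem with an extra factor `1 / (q)_(n-r₁)`. Letting
`n → ∞` (here: working modulo `X^(d+1)` with `n = 2d`) yields
`(q)_∞ · ∑_r q^(r₁²+⋯+r_m²) / ⋯ = ∑_s q^((m+1)s²) α_s`, and the Jacobi triple product identifies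
the right-hand side with `(q^(2m+3); q^(2m+3))_∞ θ(q^(m+1); q^(2m+3))`. The unit pair and the
triple product are both instances of one finite triple product, a specialisation of the
`q`-binomial theorem.
-/

open scoped Classical

open PowerSeries

/-- `(q;q)_k` as a power series over `ℚ`. -/
noncomputable def qp (k : ℕ) : PowerSeries ℚ :=
  ∏ j ∈ Finset.range k, (1 - (PowerSeries.X : PowerSeries ℚ) ^ (j + 1))

open Finset

theorem Nat.choose_two_add (a b : ℕ) : (a + b).choose 2 = a.choose 2 + b.choose 2 + a * b := by
  induction b with
  | zero => simp
  | succ b ih =>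
    rw [← add_assoc, Nat.choose_succ_succ', Nat.choose_one_right, ih, Nat.choose_succ_succ',
      Nat.choose_one_right]
    ring

theorem Nat.two_mul_choose_two_add (s : ℕ) : 2 * s.choose 2 + s = s * s := by
  induction s with
  | zero => simp
  | succ s ih => rw [Nat.choose_succ_succ', Nat.choose_one_right]; linarith

section QAnalogues

variable {A : Type*} [CommRing A] (q : A)

def qPochhammer (k : ℕ) : A := ∏ j ∈ range k, (1 - q ^ (j + 1))

@[simp] theorem qPochhammer_zero : qPochhammer q 0 = 1 := prod_range_zero _

theorem qPochhammer_succ (k : ℕ) :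
    qPochhammer q (k + 1) = qPochhammer q k * (1 - q ^ (k + 1)) :=
  prod_range_succ _ _

theorem qPochhammer_add (a b : ℕ) :
    qPochhammer q (a + b) = qPochhammer q a * ∏ j ∈ range b, (1 - q ^ (a + 1 + j)) := by
  rw [qPochhammer, prod_range_add]
  simp only [add_right_comm a]
  rfl

def gaussBinom : ℕ → ℕ → A
  | _, 0 => 1
  | 0, _ + 1 => 0
  | M + 1, t + 1 => gaussBinom M (t + 1) + q ^ (M - t) * gaussBinom M t

@[simp] theorem gaussBinom_zero_right (M : ℕ) : gaussBinom q M 0 = 1 := by cases M <;> rfl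

theorem gaussBinom_succ_succ (M t : ℕ) :
    gaussBinom q (M + 1) (t + 1) = gaussBinom q M (t + 1) + q ^ (M - t) * gaussBinom q M t :=
  rfl

theorem gaussBinom_eq_zero_of_lt : ∀ {M t : ℕ}, M < t → gaussBinom q M t = 0
  | 0, _ + 1, _ => rfl
  | M + 1, t + 1, h => by
    rw [gaussBinom_succ_succ, gaussBinom_eq_zero_of_lt (by omega),
      gaussBinom_eq_zero_of_lt (by omega), mul_zero, add_zero]

@[simp] theorem gaussBinom_self : ∀ M : ℕ, gaussBinom q M M = 1
  | 0 => rfl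
  | M + 1 => by
    rw [gaussBinom_succ_succ, gaussBinom_eq_zero_of_lt q M.lt_succ_self, gaussBinom_self M,
      Nat.sub_self, pow_zero, one_mul, zero_add]

theorem gaussBinom_add_mul_qPochhammer :
    ∀ t k : ℕ, gaussBinom q (t + k) t * (qPochhammer q t * qPochhammer q k) = qPochhammer q (t + k)
  | 0, k => by simp
  | t + 1, 0 => by simp
  | t + 1, k + 1 => by
    have h₁ := gaussBinom_add_mul_qPochhammer (t + 1) k
    have h₂ := gaussBinom_add_mul_qPochhammer t (k + 1)
    rw [show t + 1 + (k + 1) = t + 1 + k + 1 by ring, gaussBinom_succ_succ,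
      show t + 1 + k - t = k + 1 by omega, qPochhammer_succ q (t + 1 + k)]
    rw [show t + (k + 1) = t + 1 + k by ring] at h₂
    linear_combination (1 - q ^ (k + 1)) * h₁ + q ^ (k + 1) * (1 - q ^ (t + 1)) * h₂ +
      q ^ (k + 1) * gaussBinom q (t + 1 + k) t * qPochhammer q (k + 1) * qPochhammer_succ q t +
      gaussBinom q (t + 1 + k) (t + 1) * qPochhammer q (t + 1) * qPochhammer_succ q k

theorem gaussBinom_mul_qPochhammer {M t : ℕ} (h : t ≤ M) :
    gaussBinom q M t * (qPochhammer q t * qPochhammer q (M - t)) = qPochhammer q M := by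
  obtain ⟨k, rfl⟩ := Nat.exists_eq_add_of_le h
  rw [Nat.add_sub_cancel_left, gaussBinom_add_mul_qPochhammer]

theorem gaussBinom_symm {M t : ℕ} (h : t ≤ M) (hM : IsUnit (qPochhammer q M)) :
    gaussBinom q M (M - t) = gaussBinom q M t := by
  have h₁ := gaussBinom_mul_qPochhammer q h
  have h₂ := gaussBinom_mul_qPochhammer q (M.sub_le t)
  rw [Nat.sub_sub_self h, mul_comm (qPochhammer q (M - t))] at h₂
  have hu : IsUnit (qPochhammer q t * qPochhammer q (M - t)) :=
    isUnit_of_dvd_unit (Dvd.intro_left _ h₁) hM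
  exact hu.mul_left_cancel (by rw [mul_comm, h₂, mul_comm, h₁])

theorem qBinomial_term_succ (x y : A) (M j : ℕ) :
    (-1) ^ (j + 1) * gaussBinom q (M + 1) (j + 1) * q ^ (j + 1).choose 2 * x ^ (j + 1) *
        y ^ (M + 1 - (j + 1)) =
      y * ((-1) ^ (j + 1) * gaussBinom q M (j + 1) * q ^ (j + 1).choose 2 * x ^ (j + 1) *
          y ^ (M - (j + 1))) -
        x * q ^ M * ((-1) ^ j * gaussBinom q M j * q ^ j.choose 2 * x ^ j * y ^ (M - j)) := by
  rw [gaussBinom_succ_succ, Nat.choose_succ_succ', Nat.choose_one_right, Nat.add_sub_add_right]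
  rcases lt_or_ge j M with hj | hj
  · obtain ⟨k, rfl⟩ := Nat.exists_eq_add_of_lt hj
    rw [show j + k + 1 - (j + 1) = k by omega, show j + k + 1 - j = k + 1 by omega]
    ring
  · rw [gaussBinom_eq_zero_of_lt q (Nat.lt_succ_of_le hj)]
    rcases hj.eq_or_lt with rfl | hj
    · simp only [Nat.sub_self]; ring
    · rw [gaussBinom_eq_zero_of_lt q hj]; ring

theorem prod_sub_mul_pow_eq_sum (x y : A) (M : ℕ) :
    ∏ t ∈ range M, (y - x * q ^ t) =
      ∑ j ∈ range (M + 1), (-1) ^ j * gaussBinom q M j * q ^ j.choose 2 * x ^ j * y ^ (M - j) := by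
  induction M with
  | zero => simp
  | succ M ih =>
    have hshift := sum_range_succ'
      (fun j ↦ (-1) ^ j * gaussBinom q M j * q ^ j.choose 2 * x ^ j * y ^ (M - j)) (M + 1)
    rw [sum_range_succ, gaussBinom_eq_zero_of_lt q M.lt_succ_self] at hshift
    simp only [gaussBinom_zero_right, Nat.choose_zero_succ, pow_zero, one_mul, mul_one,
      Nat.sub_zero, mul_zero, zero_mul, add_zero] at hshift
    rw [prod_range_succ, ih, sum_range_succ' _ (M + 1)]
    simp only [qBinomial_term_succ q x y M, sum_sub_distrib, ← mul_sum, gaussBinom_zero_right,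
      Nat.choose_zero_succ, pow_zero, one_mul, mul_one, Nat.sub_zero]
    linear_combination y * hshift

theorem sum_range_two_mul_add_one {M : Type*} [AddCommMonoid M] (f : ℕ → M) (n : ℕ) :
    ∑ j ∈ range (2 * n + 1), f j = f n + ∑ s ∈ range n, (f (n + (s + 1)) + f (n - (s + 1))) := by
  rw [two_mul, add_right_comm, sum_range_add, sum_range_succ, sum_add_distrib,
    ← sum_range_reflect f n]
  simp only [show ∀ s, n - 1 - s = n - (s + 1) by omega, show ∀ s, n + 1 + s = n + (s + 1) by omega]
  abel

/-- The terms `s` and `-s` of the theta series `∑_{s ∈ ℤ} (-1)^s Q^(s choose 2) a^s`, where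
`b = Q / a`. -/
def thetaCoeff (Q a b : A) (s : ℕ) : A :=
  if s = 0 then 1 else (-1) ^ s * Q ^ s.choose 2 * (a ^ s + b ^ s)

theorem prod_pow_sub_mul_pow {Q a b : A} (hab : a * b = Q) (M : ℕ) :
    ∏ t ∈ range (2 * M), (Q ^ M - b * Q ^ t) =
      (-b) ^ M * Q ^ (M.choose 2 + M * M) *
        ∏ u ∈ range M, ((1 - a * Q ^ u) * (1 - b * Q ^ u)) := by
  have hlow : ∀ t ∈ range M, Q ^ M - b * Q ^ t = (-b) * Q ^ t * (1 - a * Q ^ (M - 1 - t)) := by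
    intro t ht
    obtain ⟨k, rfl⟩ := Nat.exists_eq_add_of_lt (mem_range.mp ht)
    rw [show t + k + 1 - 1 - t = k by omega, ← hab]
    ring
  have hhigh : ∀ u ∈ range M, Q ^ M - b * Q ^ (M + u) = Q ^ M * (1 - b * Q ^ u) := by
    intros; ring
  rw [two_mul, prod_range_add, prod_congr rfl hlow, prod_congr rfl hhigh]
  have hgauss : ∏ t ∈ range M, Q ^ t = Q ^ M.choose 2 := by
    rw [prod_pow_eq_pow_sum, sum_range_id, Nat.choose_two_right]
  simp only [prod_mul_distrib, prod_const, card_range, hgauss,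
    prod_range_reflect (fun u ↦ 1 - a * Q ^ u) M]
  ring

theorem pow_mul_thetaCoeff (k s : ℕ) :
    q ^ (k * s ^ 2) * thetaCoeff q 1 q s =
      thetaCoeff (q ^ (2 * k + 1)) (q ^ k) (q ^ (k + 1)) s := by
  rcases eq_or_ne s 0 with rfl | hs
  · simp [thetaCoeff]
  · rw [thetaCoeff, thetaCoeff, if_neg hs, if_neg hs, sq, ← Nat.two_mul_choose_two_add s]
    ring

theorem qBinomial_term_middle_add {Q b : A} {M s : ℕ} (hs : s ≤ M) :
    (-1) ^ (M + s) * gaussBinom Q (2 * M) (M + s) * Q ^ (M + s).choose 2 * b ^ (M + s) *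
        (Q ^ M) ^ (2 * M - (M + s)) =
      (-b) ^ M * Q ^ (M.choose 2 + M * M) *
        ((-1) ^ s * Q ^ s.choose 2 * b ^ s * gaussBinom Q (2 * M) (M + s)) := by
  obtain ⟨t, rfl⟩ := Nat.exists_eq_add_of_le hs
  rw [show 2 * (s + t) - (s + t + s) = t by omega, Nat.choose_two_add]
  ring

theorem qBinomial_term_middle_sub {Q a b : A} (hab : a * b = Q) {M s : ℕ} (hs : s ≤ M)
    (hM : IsUnit (qPochhammer Q (2 * M))) :
    (-1) ^ (M - s) * gaussBinom Q (2 * M) (M - s) * Q ^ (M - s).choose 2 * b ^ (M - s) *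
        (Q ^ M) ^ (2 * M - (M - s)) =
      (-b) ^ M * Q ^ (M.choose 2 + M * M) *
        ((-1) ^ s * Q ^ s.choose 2 * a ^ s * gaussBinom Q (2 * M) (M + s)) := by
  obtain ⟨t, rfl⟩ := Nat.exists_eq_add_of_le hs
  have hexp : t.choose 2 + (s + t) * (2 * s + t) =
      (s + t).choose 2 + (s + t) * (s + t) + s.choose 2 + s := by
    rw [Nat.choose_two_add]; nlinarith [Nat.two_mul_choose_two_add s]
  have hsign : (-1 : A) ^ s * (-1) ^ s = 1 := by rw [← mul_pow]; simp
  rw [show s + t - s = t by omega, show 2 * (s + t) - t = 2 * s + t by omega,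
    ← gaussBinom_symm Q (show s + t + s ≤ 2 * (s + t) by omega) hM,
    show 2 * (s + t) - (s + t + s) = t by omega]
  calc (-1) ^ t * gaussBinom Q (2 * (s + t)) t * Q ^ t.choose 2 * b ^ t *
        (Q ^ (s + t)) ^ (2 * s + t)
      = (-1) ^ t * gaussBinom Q (2 * (s + t)) t * b ^ t *
          Q ^ (t.choose 2 + (s + t) * (2 * s + t)) := by ring
    _ = _ := by
      rw [hexp]
      subst hab
      linear_combination -(-1) ^ t * gaussBinom (a * b) (2 * (s + t)) t * b ^ t *
        (a * b) ^ ((s + t).choose 2 + (s + t) * (s + t) + s.choose 2 + s) * hsign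

theorem sum_qBinomial_eq_sum_thetaCoeff {Q a b : A} (hab : a * b = Q) (M : ℕ)
    (hM : IsUnit (qPochhammer Q (2 * M))) :
    ∑ j ∈ range (2 * M + 1),
        (-1) ^ j * gaussBinom Q (2 * M) j * Q ^ j.choose 2 * b ^ j * (Q ^ M) ^ (2 * M - j) =
      (-b) ^ M * Q ^ (M.choose 2 + M * M) *
        ∑ s ∈ range (M + 1), thetaCoeff Q a b s * gaussBinom Q (2 * M) (M + s) := by
  rw [sum_range_two_mul_add_one, sum_range_succ', mul_add, mul_sum, add_comm]
  congr 1
  · refine sum_congr rfl fun s hs ↦ ?_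
    have hs' : s + 1 ≤ M := Nat.succ_le_of_lt (mem_range.mp hs)
    rw [qBinomial_term_middle_add hs', qBinomial_term_middle_sub hab hs' hM, thetaCoeff,
      if_neg s.succ_ne_zero]
    ring
  · rw [show 2 * M - M = M by omega, thetaCoeff, if_pos rfl, Nat.add_zero]
    ring

theorem finite_jacobi_triple_product [IsDomain A] {Q a b : A} (hab : a * b = Q) (ha : a ≠ 0)
    (hb : b ≠ 0) (M : ℕ) (hM : IsUnit (qPochhammer Q (2 * M))) :
    ∏ u ∈ range M, ((1 - a * Q ^ u) * (1 - b * Q ^ u)) =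
      ∑ s ∈ range (M + 1), thetaCoeff Q a b s * gaussBinom Q (2 * M) (M + s) := by
  have h := prod_sub_mul_pow_eq_sum Q b (Q ^ M) (2 * M)
  rw [prod_pow_sub_mul_pow hab, sum_qBinomial_eq_sum_thetaCoeff hab M hM] at h
  have hQ : Q ≠ 0 := hab ▸ mul_ne_zero ha hb
  exact mul_left_cancel₀ (mul_ne_zero (pow_ne_zero _ (neg_ne_zero.mpr hb)) (pow_ne_zero _ hQ)) h

/-- A `q`-Chu–Vandermonde summation. -/
theorem sum_pow_mul_gaussBinom_mul_prod_eq_one (M c : ℕ) :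
    ∑ t ∈ range (M + 1),
      q ^ (t * (t + c)) * gaussBinom q M t * ∏ j ∈ range (M - t), (1 - q ^ (c + t + 1 + j)) =
      1 := by
  induction M generalizing c with
  | zero => simp
  | succ M ih =>
    set f : ℕ → A := fun t ↦
      q ^ (t * (t + c)) * gaussBinom q M t * ∏ j ∈ range (M + 1 - t), (1 - q ^ (c + t + 1 + j))
    have hpascal : ∀ t ∈ range (M + 1),
        q ^ ((t + 1) * (t + 1 + c)) * gaussBinom q (M + 1) (t + 1) *
            ∏ j ∈ range (M + 1 - (t + 1)), (1 - q ^ (c + (t + 1) + 1 + j)) =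
          f (t + 1) + q ^ (c + 1 + M) * (q ^ (t * (t + (c + 1))) * gaussBinom q M t *
            ∏ j ∈ range (M - t), (1 - q ^ (c + 1 + t + 1 + j))) := by
      intro t ht
      obtain ⟨k, rfl⟩ := Nat.exists_eq_add_of_le (Nat.lt_succ_iff.mp (mem_range.mp ht))
      simp only [f, gaussBinom_succ_succ, Nat.add_sub_add_right, Nat.add_sub_cancel_left,
        show ∀ j, c + (t + 1) + 1 + j = c + 1 + t + 1 + j by omega]
      ring
    have hlower : ∑ t ∈ range (M + 1), f (t + 1) + f 0 =
        (1 - q ^ (c + 1 + M)) * ∑ t ∈ range (M + 1),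
          q ^ (t * (t + c)) * gaussBinom q M t *
            ∏ j ∈ range (M - t), (1 - q ^ (c + t + 1 + j)) := by
      rw [← sum_range_succ', sum_range_succ, mul_sum]
      have hlast : f (M + 1) = 0 := by simp [f, gaussBinom_eq_zero_of_lt q M.lt_succ_self]
      rw [hlast, add_zero]
      refine sum_congr rfl fun t ht ↦ ?_
      obtain ⟨k, rfl⟩ := Nat.exists_eq_add_of_le (Nat.lt_succ_iff.mp (mem_range.mp ht))
      simp only [f, show t + k + 1 - t = k + 1 by omega, Nat.add_sub_cancel_left, prod_range_succ,
        show c + t + 1 + k = c + 1 + (t + k) by omega]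
      ring
    have hfirst : f 0 = ∏ j ∈ range (M + 1), (1 - q ^ (c + 1 + j)) := by simp [f]
    rw [sum_range_succ', sum_congr rfl hpascal, sum_add_distrib, ← mul_sum, ih (c + 1)]
    simp only [zero_mul, pow_zero, gaussBinom_zero_right, one_mul, Nat.sub_zero, add_zero]
    rw [← hfirst, add_right_comm, hlower, ih c]
    ring

end QAnalogues

section Bailey

variable {K : Type*} [Field K]

variable {q : K⟦X⟧}

theorem constantCoeff_qPochhammer (hq : constantCoeff q = 0) (k : ℕ) :
    constantCoeff (qPochhammer q k) = 1 := by
  simp [qPochhammer, map_prod, hq]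

theorem isUnit_qPochhammer (hq : constantCoeff q = 0) (k : ℕ) : IsUnit (qPochhammer q k) :=
  isUnit_iff_constantCoeff.mpr (by simp [constantCoeff_qPochhammer hq])

theorem qPochhammer_mul_inv (hq : constantCoeff q = 0) (k : ℕ) :
    qPochhammer q k * (qPochhammer q k)⁻¹ = 1 :=
  PowerSeries.mul_inv_cancel _ (by simp [constantCoeff_qPochhammer hq])

theorem gaussBinom_eq_mul_inv (hq : constantCoeff q = 0) {M t : ℕ} (h : t ≤ M) :
    gaussBinom q M t = qPochhammer q M * (qPochhammer q t)⁻¹ * (qPochhammer q (M - t))⁻¹ := by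
  rw [← gaussBinom_mul_qPochhammer q h]
  linear_combination -gaussBinom q M t * ((qPochhammer q t * (qPochhammer q t)⁻¹) *
    qPochhammer_mul_inv hq (M - t) + qPochhammer_mul_inv hq t)

/-- Bailey's lemma in the form that sends the pair `(α_s, β_n)` to `(q^(s²) α_s, β'_n)`, with
`β'_n = ∑_r q^(r²) β_r / (q)_(n-r)`. -/
theorem sum_Icc_bailey (hq : constantCoeff q = 0) {s n : ℕ} (hsn : s ≤ n) :
    ∑ r ∈ Icc s n, q ^ (r ^ 2) * (qPochhammer q (n - r))⁻¹ * (qPochhammer q (r - s))⁻¹ *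
        (qPochhammer q (r + s))⁻¹ =
      q ^ (s ^ 2) * (qPochhammer q (n - s))⁻¹ * (qPochhammer q (n + s))⁻¹ := by
  obtain ⟨k, rfl⟩ := Nat.exists_eq_add_of_le hsn
  rw [← Ico_add_one_right_eq_Icc, sum_Ico_eq_sum_range, show s + k + 1 - s = k + 1 by omega]
  have hterm : ∀ t ∈ range (k + 1),
      q ^ ((s + t) ^ 2) * (qPochhammer q (s + k - (s + t)))⁻¹ * (qPochhammer q (s + t - s))⁻¹ *
          (qPochhammer q (s + t + s))⁻¹ =
        q ^ (s ^ 2) * (qPochhammer q k)⁻¹ * (qPochhammer q (2 * s + k))⁻¹ *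
          (q ^ (t * (t + 2 * s)) * gaussBinom q k t *
            ∏ j ∈ range (k - t), (1 - q ^ (2 * s + t + 1 + j))) := by
    intro t ht
    obtain ⟨l, rfl⟩ := Nat.exists_eq_add_of_le (Nat.lt_succ_iff.mp (mem_range.mp ht))
    have hprod : ∏ j ∈ range l, (1 - q ^ (2 * s + t + 1 + j)) =
        qPochhammer q (2 * s + t + l) * (qPochhammer q (2 * s + t))⁻¹ := by
      rw [qPochhammer_add]
      linear_combination (-∏ j ∈ range l, (1 - q ^ (2 * s + t + 1 + j))) *
        qPochhammer_mul_inv hq (2 * s + t)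
    rw [show s + (t + l) - (s + t) = l by omega, Nat.add_sub_cancel_left, Nat.add_sub_cancel_left,
      gaussBinom_eq_mul_inv hq (Nat.le_add_right t l), Nat.add_sub_cancel_left, hprod,
      show s + t + s = 2 * s + t by ring, show 2 * s + (t + l) = 2 * s + t + l by ring]
    linear_combination (-(q ^ (s ^ 2) * q ^ (t * (t + 2 * s)) * (qPochhammer q t)⁻¹ *
      (qPochhammer q l)⁻¹ * (qPochhammer q (2 * s + t))⁻¹)) *
        ((qPochhammer q (2 * s + t + l))⁻¹ * qPochhammer q (2 * s + t + l) *
          qPochhammer_mul_inv hq (t + l) + qPochhammer_mul_inv hq (2 * s + t + l))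
  rw [sum_congr rfl hterm, ← mul_sum, sum_pow_mul_gaussBinom_mul_prod_eq_one, mul_one,
    Nat.add_sub_cancel_left, show s + k + s = 2 * s + k by ring]

/-- The unit Bailey pair: `α_s = thetaCoeff q 1 q s` and `β_n = δ_(n,0)`. -/
theorem sum_thetaCoeff_mul_inv_qPochhammer (hq : constantCoeff q = 0) (hq₀ : q ≠ 0) (n : ℕ) :
    ∑ s ∈ range (n + 1), thetaCoeff q 1 q s * (qPochhammer q (n - s))⁻¹ *
        (qPochhammer q (n + s))⁻¹ = if n = 0 then 1 else 0 := by
  rcases Nat.eq_zero_or_pos n with rfl | hn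
  · simp [thetaCoeff, qPochhammer]
  have hjtp := finite_jacobi_triple_product (one_mul q) one_ne_zero hq₀ n (isUnit_qPochhammer hq _)
  have hzero : ∏ u ∈ range n, ((1 - 1 * q ^ u) * (1 - q * q ^ u)) = 0 :=
    prod_eq_zero (mem_range.mpr hn) (by simp)
  have hterm : ∀ s ∈ range (n + 1),
      thetaCoeff q 1 q s * (qPochhammer q (n - s))⁻¹ * (qPochhammer q (n + s))⁻¹ =
        (qPochhammer q (2 * n))⁻¹ * (thetaCoeff q 1 q s * gaussBinom q (2 * n) (n + s)) := by
    intro s hs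
    rw [gaussBinom_eq_mul_inv hq (by simp at hs; omega), show 2 * n - (n + s) = n - s by omega]
    linear_combination (-(thetaCoeff q 1 q s * (qPochhammer q (n + s))⁻¹ *
      (qPochhammer q (n - s))⁻¹)) * qPochhammer_mul_inv hq (2 * n)
  rw [if_neg hn.ne', sum_congr rfl hterm, ← mul_sum, ← hjtp, hzero, mul_zero]

/-- `β_n` of the `l`-th pair in the Bailey chain of the unit pair. -/
noncomputable def baileyBeta (q : K⟦X⟧) : ℕ → ℕ → K⟦X⟧
  | 0, n => if n = 0 then 1 else 0
  | l + 1, n => ∑ r ∈ range (n + 1), q ^ (r ^ 2) * (qPochhammer q (n - r))⁻¹ * baileyBeta q l r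

theorem baileyBeta_eq (hq : constantCoeff q = 0) (hq₀ : q ≠ 0) (l n : ℕ) :
    baileyBeta q l n = ∑ s ∈ range (n + 1), q ^ (l * s ^ 2) * thetaCoeff q 1 q s *
      (qPochhammer q (n - s))⁻¹ * (qPochhammer q (n + s))⁻¹ := by
  induction l generalizing n with
  | zero =>
    rw [baileyBeta, ← sum_thetaCoeff_mul_inv_qPochhammer hq hq₀]
    simp
  | succ l ih =>
    simp only [baileyBeta, ih, mul_sum]
    simp only [range_eq_Ico]
    rw [← sum_Ico_Ico_comm]
    refine sum_congr rfl fun s hs ↦ ?_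
    have hbailey := sum_Icc_bailey hq (Nat.lt_succ_iff.mp (mem_Ico.mp hs).2)
    rw [← Ico_add_one_right_eq_Icc] at hbailey
    calc ∑ r ∈ Ico s (n + 1), q ^ (r ^ 2) * (qPochhammer q (n - r))⁻¹ *
          (q ^ (l * s ^ 2) * thetaCoeff q 1 q s * (qPochhammer q (r - s))⁻¹ *
            (qPochhammer q (r + s))⁻¹)
        = q ^ (l * s ^ 2) * thetaCoeff q 1 q s * ∑ r ∈ Ico s (n + 1), q ^ (r ^ 2) *
            (qPochhammer q (n - r))⁻¹ * (qPochhammer q (r - s))⁻¹ * (qPochhammer q (r + s))⁻¹ := by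
          rw [mul_sum]; exact sum_congr rfl fun _ _ ↦ by ring
      _ = _ := by rw [hbailey]; ring

end Bailey

section Truncation

theorem SModEq.sum_range_ite {R : Type*} [CommRing R] {I : Ideal R} {f g : ℕ → R} {n d : ℕ}
    (hfg : ∀ k ≤ n, k ≤ d → f k ≡ g k [SMOD I]) (hf : ∀ k ≤ n, d < k → f k ≡ 0 [SMOD I]) :
    ∑ k ∈ range (n + 1), f k ≡ ∑ k ∈ range (d + 1), (if k ≤ n then g k else 0) [SMOD I] :=
  calc ∑ k ∈ range (n + 1), f k ≡ ∑ k ∈ range (n + 1), (if k ≤ d then g k else 0) [SMOD I] :=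
        SModEq.sum fun k hk ↦ by
          have hkn := Nat.lt_succ_iff.mp (mem_range.mp hk)
          split_ifs with hkd
          exacts [hfg k hkn hkd, hf k hkn (not_le.mp hkd)]
    _ = ∑ k ∈ range (d + 1), (if k ≤ n then g k else 0) := by
        rw [← sum_filter, ← sum_filter]
        congr 1
        ext k
        simp only [mem_filter, mem_range]
        omega

theorem SModEq.sum_range_of_le {R : Type*} [CommRing R] {I : Ideal R} {f g : ℕ → R} {n d : ℕ}
    (hdn : d ≤ n) (hfg : ∀ k ≤ d, f k ≡ g k [SMOD I]) (hf : ∀ k ≤ n, d < k → f k ≡ 0 [SMOD I]) :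
    ∑ k ∈ range (n + 1), f k ≡ ∑ k ∈ range (d + 1), g k [SMOD I] := by
  convert SModEq.sum_range_ite (fun k _ hkd ↦ hfg k hkd) hf using 1
  exact sum_congr rfl fun k hk ↦ (if_pos ((Nat.lt_succ_iff.mp (mem_range.mp hk)).trans hdn)).symm

theorem SModEq.prod_range_of_le {R : Type*} [CommRing R] {I : Ideal R} {f : ℕ → R} {n d : ℕ}
    (hdn : d ≤ n) (hf : ∀ k ≤ n, d < k → f k ≡ 1 [SMOD I]) :
    ∏ k ∈ range (n + 1), f k ≡ ∏ k ∈ range (d + 1), f k [SMOD I] := by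
  obtain ⟨e, rfl⟩ := Nat.exists_eq_add_of_le hdn
  rw [show d + e + 1 = d + 1 + e by ring, prod_range_add]
  simpa using SModEq.mul SModEq.rfl (SModEq.prod (s := range e) (y := fun _ ↦ (1 : R))
    fun j hj ↦ hf (d + 1 + j) (by simp at hj; omega) (by omega))

variable {R : Type*} [CommRing R] {d : ℕ}

theorem PowerSeries.coeff_eq_of_smodEq {f g : R⟦X⟧} (h : f ≡ g [SMOD Ideal.span {X ^ (d + 1)}]) :
    coeff d f = coeff d g := by
  rw [SModEq.sub_mem, Ideal.mem_span_singleton, X_pow_dvd_iff] at h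
  exact sub_eq_zero.mp (by simpa using h d d.lt_succ_self)

theorem PowerSeries.pow_smodEq_zero {q : R⟦X⟧} (hq : constantCoeff q = 0) {e : ℕ} (he : d < e) :
    q ^ e ≡ 0 [SMOD Ideal.span {X ^ (d + 1)}] := by
  rw [SModEq.zero, Ideal.mem_span_singleton]
  exact (pow_dvd_pow X he).trans (pow_dvd_pow_of_dvd (X_dvd_iff.mpr hq) e)

theorem qPochhammer_add_smodEq {q : R⟦X⟧} (hq : constantCoeff q = 0) {a : ℕ} (ha : d ≤ a)
    (k : ℕ) : qPochhammer q (a + k) ≡ qPochhammer q a [SMOD Ideal.span {X ^ (d + 1)}] := by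
  rw [qPochhammer_add]
  conv_rhs => rw [← mul_one (qPochhammer q a), ← prod_const_one (s := range k)]
  refine SModEq.rfl.mul (SModEq.prod fun j _ ↦ ?_)
  simpa using (SModEq.refl 1).sub (pow_smodEq_zero hq (by omega : d < a + 1 + j))

theorem qPochhammer_smodEq {q : R⟦X⟧} (hq : constantCoeff q = 0) {a b : ℕ} (ha : d ≤ a)
    (hb : d ≤ b) : qPochhammer q a ≡ qPochhammer q b [SMOD Ideal.span {X ^ (d + 1)}] := by
  rcases le_total a b with hab | hab
  · obtain ⟨k, rfl⟩ := Nat.exists_eq_add_of_le hab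
    exact (qPochhammer_add_smodEq hq ha k).symm
  · obtain ⟨k, rfl⟩ := Nat.exists_eq_add_of_le hab
    exact qPochhammer_add_smodEq hq hb k

variable {K : Type*} [Field K]

theorem PowerSeries.inv_smodEq_inv {f g : K⟦X⟧} (h : f ≡ g [SMOD Ideal.span {X ^ (d + 1)}])
    (hf : constantCoeff f ≠ 0) (hg : constantCoeff g ≠ 0) :
    f⁻¹ ≡ g⁻¹ [SMOD Ideal.span {X ^ (d + 1)}] := by
  have h' := (SModEq.rfl (x := f⁻¹)).mul (h.symm.mul (SModEq.rfl (x := g⁻¹)))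
  rwa [PowerSeries.mul_inv_cancel g hg, mul_one, ← mul_assoc,
    PowerSeries.inv_mul_cancel f hf, one_mul] at h'

theorem inv_qPochhammer_smodEq {q : K⟦X⟧} (hq : constantCoeff q = 0) {a b : ℕ} (ha : d ≤ a)
    (hb : d ≤ b) :
    (qPochhammer q a)⁻¹ ≡ (qPochhammer q b)⁻¹ [SMOD Ideal.span {X ^ (d + 1)}] :=
  inv_smodEq_inv (qPochhammer_smodEq hq ha hb) (by simp [constantCoeff_qPochhammer hq])
    (by simp [constantCoeff_qPochhammer hq])

end Truncation

section Multisum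

variable {K : Type*} [Field K] (q : K⟦X⟧) {m b : ℕ}

/-- `padZero r k = r_k` for `k < m` and `0` beyond, so that the last factor `(q)_(r_m - r_(m+1))`
of the Andrews–Gordon summand is `(q)_(r_m)`. -/
def padZero (r : Fin m → Fin (b + 1)) (k : ℕ) : ℕ := if h : k < m then r ⟨k, h⟩ else 0

@[simp] theorem padZero_cons_zero (k : Fin (b + 1)) (t : Fin m → Fin (b + 1)) :
    padZero (Fin.cons k t : Fin (m + 1) → Fin (b + 1)) 0 = k := rfl

@[simp] theorem padZero_cons_succ (k : Fin (b + 1)) (t : Fin m → Fin (b + 1)) (i : ℕ) :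
    padZero (Fin.cons k t : Fin (m + 1) → Fin (b + 1)) (i + 1) = padZero t i := by
  unfold padZero
  split_ifs <;> first | rfl | omega

theorem antitone_cons_iff (k : Fin (b + 1)) (t : Fin m → Fin (b + 1)) :
    Antitone (Fin.cons k t : Fin (m + 1) → Fin (b + 1)) ↔ padZero t 0 ≤ k ∧ Antitone t := by
  rw [Fin.antitone_iff_succ_le]
  cases m with
  | zero => simp [padZero, Subsingleton.antitone]
  | succ m =>
    rw [Fin.antitone_iff_succ_le]
    simp only [Fin.forall_fin_succ, Fin.cons_succ, Fin.castSucc_zero, Fin.cons_zero,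
      ← Fin.succ_castSucc]
    rfl

theorem padZero_le (r : Fin m → Fin (b + 1)) (k : ℕ) : padZero r k ≤ b := by
  unfold padZero
  split_ifs
  exacts [Fin.is_le _, Nat.zero_le b]

noncomputable def multisumTerm (r : Fin m → Fin (b + 1)) : K⟦X⟧ :=
  q ^ (∑ i ∈ range m, padZero r i ^ 2) *
    (∏ i ∈ range m, qPochhammer q (padZero r i - padZero r (i + 1)))⁻¹

theorem multisumTerm_cons (k : Fin (b + 1)) (t : Fin m → Fin (b + 1)) :
    multisumTerm q (Fin.cons k t : Fin (m + 1) → Fin (b + 1)) =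
      q ^ ((k : ℕ) ^ 2) * (qPochhammer q (k - padZero t 0))⁻¹ * multisumTerm q t := by
  simp only [multisumTerm, sum_range_succ', prod_range_succ', padZero_cons_succ, padZero_cons_zero,
    PowerSeries.mul_inv_rev, pow_add]
  ring

/-- `β_n` of the `(m+1)`-st Bailey pair unfolded into an `m`-fold sum, with entries cut off at
`b`. -/
noncomputable def multisum (m b n : ℕ) : K⟦X⟧ :=
  ∑ r ∈ univ.filter (fun r : Fin m → Fin (b + 1) ↦ Antitone r ∧ padZero r 0 ≤ n),
    (qPochhammer q (n - padZero r 0))⁻¹ * multisumTerm q r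

theorem multisum_zero (b n : ℕ) : multisum q 0 b n = (qPochhammer q n)⁻¹ := by
  simp [multisum, multisumTerm, padZero, Subsingleton.antitone, filter_true_of_mem]

theorem multisum_succ (m b n : ℕ) :
    multisum q (m + 1) b n = ∑ k ∈ range (b + 1),
      if k ≤ n then q ^ (k ^ 2) * (qPochhammer q (n - k))⁻¹ * multisum q m b k else 0 := by
  rw [← Fin.sum_univ_eq_sum_range (fun k ↦ if k ≤ n then _ else 0), multisum, sum_filter,
    ← (Fin.consEquiv fun _ ↦ Fin (b + 1)).sum_comp, Fintype.sum_prod_type]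
  refine sum_congr rfl fun k _ ↦ ?_
  simp only [show ∀ p, Fin.consEquiv (fun _ ↦ Fin (b + 1)) p = Fin.cons p.1 p.2 from fun _ ↦ rfl,
    antitone_cons_iff, padZero_cons_zero, multisumTerm_cons,
    multisum, sum_filter, mul_sum]
  split_ifs with hk
  · refine sum_congr rfl fun t _ ↦ ?_
    by_cases ht : padZero t 0 ≤ k ∧ Antitone t
    · rw [if_pos ⟨ht, hk⟩, if_pos ⟨ht.2, ht.1⟩]
      ring
    · rw [if_neg (fun h ↦ ht h.1), if_neg (fun h ↦ ht ⟨h.2, h.1⟩), mul_zero]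
  · exact sum_eq_zero fun t _ ↦ if_neg fun h ↦ hk h.2

variable {q}

theorem multisum_smodEq_baileyBeta (hq : constantCoeff q = 0) (m b n : ℕ) :
    multisum q m b n ≡ baileyBeta q (m + 1) n [SMOD Ideal.span {X ^ (b + 1)}] := by
  induction m generalizing n with
  | zero =>
    rw [multisum_zero, baileyBeta, sum_range_succ', sum_eq_zero fun r _ ↦ by simp [baileyBeta]]
    simp [baileyBeta]
  | succ m ih =>
    rw [multisum_succ, baileyBeta]
    refine SModEq.symm (SModEq.sum_range_ite (fun k _ _ ↦ SModEq.mul SModEq.rfl (ih k).symm) ?_)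
    intro k _ hk
    simpa using ((pow_smodEq_zero hq (by nlinarith : b < k ^ 2)).mul SModEq.rfl).mul SModEq.rfl

theorem qPochhammer_mul_multisum_smodEq (hq : constantCoeff q = 0) {m b n : ℕ} (hn : 2 * b ≤ n) :
    qPochhammer q b * multisum q m b n ≡
      ∑ r ∈ univ.filter (fun r : Fin m → Fin (b + 1) ↦ Antitone r), multisumTerm q r
      [SMOD Ideal.span {X ^ (b + 1)}] := by
  rw [multisum, mul_sum,
    filter_congr fun r _ ↦ and_iff_left (((padZero_le r 0).trans (by omega : b ≤ n)))]
  refine SModEq.sum fun r _ ↦ ?_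
  have hinv := inv_qPochhammer_smodEq hq (by have := padZero_le r 0; omega : b ≤ n - padZero r 0)
    le_rfl
  simpa [← mul_assoc, qPochhammer_mul_inv hq] using (SModEq.rfl (x := qPochhammer q b)).mul
    (hinv.mul (SModEq.rfl (x := multisumTerm q r)))

theorem baileyBeta_smodEq (hq : constantCoeff q = 0) (hq₀ : q ≠ 0) {b n : ℕ} (hn : 2 * b ≤ n)
    (l : ℕ) :
    baileyBeta q (l + 1) n ≡ (qPochhammer q b)⁻¹ * (qPochhammer q b)⁻¹ *
      ∑ s ∈ range (b + 1), q ^ ((l + 1) * s ^ 2) * thetaCoeff q 1 q s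
      [SMOD Ideal.span {X ^ (b + 1)}] := by
  rw [baileyBeta_eq hq hq₀, mul_sum]
  refine SModEq.sum_range_of_le (by omega) (fun s hs ↦ ?_) fun s _ hs ↦ ?_
  · have h₁ := inv_qPochhammer_smodEq hq (by omega : b ≤ n - s) le_rfl
    have h₂ := inv_qPochhammer_smodEq hq (by omega : b ≤ n + s) le_rfl
    convert (SModEq.rfl (x := q ^ ((l + 1) * s ^ 2) * thetaCoeff q 1 q s)).mul (h₁.mul h₂) using 1
    · ring
    · ring
  · simpa using (((pow_smodEq_zero hq (by nlinarith : b < (l + 1) * s ^ 2)).mul SModEq.rfl).mul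
      SModEq.rfl).mul SModEq.rfl

theorem sum_thetaCoeff_smodEq {Q a b : K⟦X⟧} (hab : a * b = Q) (ha : constantCoeff a = 0)
    (hb : constantCoeff b = 0) (ha₀ : a ≠ 0) (hb₀ : b ≠ 0) (d : ℕ) :
    ∑ s ∈ range (d + 1), thetaCoeff Q a b s ≡
      qPochhammer Q (d + 1) * ∏ u ∈ range (d + 1), ((1 - a * Q ^ u) * (1 - b * Q ^ u))
      [SMOD Ideal.span {X ^ (d + 1)}] := by
  have hQ : constantCoeff Q = 0 := by rw [← hab, map_mul, ha, zero_mul]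
  set M := 2 * d + 1
  have hsum : ∑ s ∈ range (M + 1), thetaCoeff Q a b s * gaussBinom Q (2 * M) (M + s) ≡
      ∑ s ∈ range (d + 1), thetaCoeff Q a b s * (qPochhammer Q d)⁻¹
      [SMOD Ideal.span {X ^ (d + 1)}] := by
    refine SModEq.sum_range_of_le (by omega) (fun s hs ↦ ?_) fun s _ hs ↦ ?_
    · rw [gaussBinom_eq_mul_inv hQ (by omega), show 2 * M - (M + s) = M - s by omega]
      have h₁ := qPochhammer_smodEq hQ (by omega : d ≤ 2 * M) le_rfl
      have h₂ := inv_qPochhammer_smodEq hQ (by omega : d ≤ M + s) le_rfl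
      have h₃ := inv_qPochhammer_smodEq hQ (by omega : d ≤ M - s) le_rfl
      simpa [qPochhammer_mul_inv hQ] using
        (SModEq.rfl (x := thetaCoeff Q a b s)).mul ((h₁.mul h₂).mul h₃)
    · rw [thetaCoeff, if_neg (by omega)]
      simpa using ((SModEq.rfl (x := (-1) ^ s * Q ^ s.choose 2)).mul
        ((pow_smodEq_zero ha hs).add (pow_smodEq_zero hb hs))).mul SModEq.rfl
  have hprod := SModEq.prod_range_of_le (f := fun u ↦ (1 - a * Q ^ u) * (1 - b * Q ^ u))
    (I := Ideal.span {X ^ (d + 1)}) (n := 2 * d) (d := d) (by omega) fun u _ hu ↦ by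
      have hQu := pow_smodEq_zero hQ hu
      simpa using ((SModEq.refl 1).sub ((SModEq.refl a).mul hQu)).mul
        ((SModEq.refl 1).sub ((SModEq.refl b).mul hQu))
  rw [finite_jacobi_triple_product hab ha₀ hb₀ M (isUnit_qPochhammer hQ _)] at hprod
  calc ∑ s ∈ range (d + 1), thetaCoeff Q a b s
      = (∑ s ∈ range (d + 1), thetaCoeff Q a b s * (qPochhammer Q d)⁻¹) * qPochhammer Q d := by
        rw [← sum_mul, mul_assoc, mul_comm _ (qPochhammer Q d), qPochhammer_mul_inv hQ, mul_one]
    _ ≡ (∏ u ∈ range (d + 1), ((1 - a * Q ^ u) * (1 - b * Q ^ u))) * qPochhammer Q (d + 1)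
        [SMOD Ideal.span {X ^ (d + 1)}] :=
        (hsum.symm.trans hprod).mul (qPochhammer_smodEq hQ le_rfl d.le_succ)
    _ = _ := mul_comm _ _

theorem sum_multisumTerm_smodEq (hq : constantCoeff q = 0) (hq₀ : q ≠ 0) (m d : ℕ) :
    ∑ r ∈ univ.filter (fun r : Fin m → Fin (d + 1) ↦ Antitone r), multisumTerm q r ≡
      qPochhammer (q ^ (2 * m + 3)) (d + 1) * (qPochhammer q (d + 1))⁻¹ *
        ∏ u ∈ range (d + 1),
          ((1 - q ^ (m + 1) * (q ^ (2 * m + 3)) ^ u) * (1 - q ^ (m + 2) * (q ^ (2 * m + 3)) ^ u))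
      [SMOD Ideal.span {X ^ (d + 1)}] := by
  have hpow : ∀ k, constantCoeff (q ^ (k + 1)) = 0 := fun k ↦ by simp [hq]
  have hθ : ∀ s, q ^ ((m + 1) * s ^ 2) * thetaCoeff q 1 q s =
      thetaCoeff (q ^ (2 * m + 3)) (q ^ (m + 1)) (q ^ (m + 2)) s :=
    fun s ↦ by rw [pow_mul_thetaCoeff]; ring_nf
  have hjtp := sum_thetaCoeff_smodEq (Q := q ^ (2 * m + 3)) (by rw [← pow_add]; ring_nf)
    (hpow m) (hpow (m + 1)) (pow_ne_zero _ hq₀) (pow_ne_zero _ hq₀) d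
  calc ∑ r ∈ univ.filter (fun r : Fin m → Fin (d + 1) ↦ Antitone r), multisumTerm q r
      ≡ qPochhammer q d * multisum q m d (2 * d) [SMOD Ideal.span {X ^ (d + 1)}] :=
        (qPochhammer_mul_multisum_smodEq hq le_rfl).symm
    _ ≡ qPochhammer q d * baileyBeta q (m + 1) (2 * d) [SMOD Ideal.span {X ^ (d + 1)}] :=
        SModEq.mul SModEq.rfl (multisum_smodEq_baileyBeta hq m d (2 * d))
    _ ≡ qPochhammer q d * ((qPochhammer q d)⁻¹ * (qPochhammer q d)⁻¹ *
          ∑ s ∈ range (d + 1), q ^ ((m + 1) * s ^ 2) * thetaCoeff q 1 q s)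
        [SMOD Ideal.span {X ^ (d + 1)}] :=
        SModEq.mul SModEq.rfl (baileyBeta_smodEq hq hq₀ le_rfl m)
    _ = (qPochhammer q d)⁻¹ *
          ∑ s ∈ range (d + 1), thetaCoeff (q ^ (2 * m + 3)) (q ^ (m + 1)) (q ^ (m + 2)) s := by
        rw [← mul_assoc, ← mul_assoc, qPochhammer_mul_inv hq, one_mul]
        simp only [hθ]
    _ ≡ (qPochhammer q (d + 1))⁻¹ * (qPochhammer (q ^ (2 * m + 3)) (d + 1) *
          ∏ u ∈ range (d + 1), ((1 - q ^ (m + 1) * (q ^ (2 * m + 3)) ^ u) *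
            (1 - q ^ (m + 2) * (q ^ (2 * m + 3)) ^ u))) [SMOD Ideal.span {X ^ (d + 1)}] :=
        (inv_qPochhammer_smodEq hq le_rfl d.le_succ).mul hjtp
    _ = _ := by ring

end Multisum

theorem andrews_gordon_top_general (m : ℕ) (d : ℕ) :
    PowerSeries.coeff (R := ℚ) d
        (∑ r ∈ Finset.univ.filter
            (fun r : Fin m → Fin (d + 1) => ∀ i j : Fin m, i ≤ j → (r j : ℕ) ≤ (r i : ℕ)),
          (PowerSeries.X : PowerSeries ℚ) ^
              (∑ i ∈ Finset.range m, ((fun k => if h : k < m then (r ⟨k, h⟩ : ℕ) else 0) i) ^ 2) *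
            (∏ i ∈ Finset.range m,
              qp ((fun k => if h : k < m then (r ⟨k, h⟩ : ℕ) else 0) i
                  - (fun k => if h : k < m then (r ⟨k, h⟩ : ℕ) else 0) (i + 1)))⁻¹)
      = PowerSeries.coeff (R := ℚ) d
        ((∏ j ∈ Finset.range (d + 1), (1 - (PowerSeries.X : PowerSeries ℚ) ^ ((2 * m + 3) * (j + 1)))) *
          (∏ j ∈ Finset.range (d + 1), (1 - (PowerSeries.X : PowerSeries ℚ) ^ (j + 1)))⁻¹ *
          ∏ j ∈ Finset.range (d + 1),
            ((1 - (PowerSeries.X : PowerSeries ℚ) ^ ((2 * m + 3) * j + (m + 1))) *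
              (1 - (PowerSeries.X : PowerSeries ℚ) ^ ((2 * m + 3) * j + (m + 2))))) := by
  refine coeff_eq_of_smodEq ?_
  convert sum_multisumTerm_smodEq constantCoeff_X (X_ne_zero (R := ℚ)) m d using 1
  · exact sum_congr (filter_congr fun r _ ↦ ⟨fun h _ _ hij ↦ h _ _ hij, fun h _ _ hij ↦ h hij⟩)
      fun _ _ ↦ rfl
  · simp only [qPochhammer, ← pow_mul, ← pow_add, add_comm]

/-- The Andrews–Gordon identity for `i = m+1`, stated coefficientwise as formal power
series in `q`: for every degree `d`, the coefficient of `q^d` of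
`∑_{r₁ ≥ ⋯ ≥ r_m ≥ 0} q^{r₁²+⋯+r_m²}/((q)_{r₁-r₂}⋯(q)_{r_{m-1}-r_m}(q)_{r_m})` equals that
of `(q^{2m+3};q^{2m+3})_∞/(q)_∞ · θ(q^{m+1};q^{2m+3})`, where
`θ(q^{m+1};q^{2m+3}) = ∏_{j≥0}(1-q^{(2m+3)j+m+1})(1-q^{(2m+3)j+m+2})`.  Tuples with some
`r_i > d` and product factors of degree `> d` contribute nothing to the coefficient of
`q^d`, so both sides are truncated accordingly. -/
theorem andrews_gordon_top (m : ℕ) (hm : 1 ≤ m) (d : ℕ) :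
    PowerSeries.coeff (R := ℚ) d
        (∑ r ∈ Finset.univ.filter
            (fun r : Fin m → Fin (d + 1) => ∀ i j : Fin m, i ≤ j → (r j : ℕ) ≤ (r i : ℕ)),
          (PowerSeries.X : PowerSeries ℚ) ^
              (∑ i ∈ Finset.range m, ((fun k => if h : k < m then (r ⟨k, h⟩ : ℕ) else 0) i) ^ 2) *
            (∏ i ∈ Finset.range m,
              qp ((fun k => if h : k < m then (r ⟨k, h⟩ : ℕ) else 0) i
                  - (fun k => if h : k < m then (r ⟨k, h⟩ : ℕ) else 0) (i + 1)))⁻¹)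
      = PowerSeries.coeff (R := ℚ) d
        ((∏ j ∈ Finset.range (d + 1), (1 - (PowerSeries.X : PowerSeries ℚ) ^ ((2 * m + 3) * (j + 1)))) *
          (∏ j ∈ Finset.range (d + 1), (1 - (PowerSeries.X : PowerSeries ℚ) ^ (j + 1)))⁻¹ *
          ∏ j ∈ Finset.range (d + 1),
            ((1 - (PowerSeries.X : PowerSeries ℚ) ^ ((2 * m + 3) * j + (m + 1))) *
              (1 - (PowerSeries.X : PowerSeries ℚ) ^ ((2 * m + 3) * j + (m + 2))))) :=
  andrews_gordon_top_general m d
end
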